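/- arXiv:0906.4706 — 2 statements merged into one kernel-verified Lean document; each statement's English description precedes it below -/
import Mathlib

section
/- Let (H, V) be a violator space and (Ĥ, V̂) its multiset extension with respect to multiplicities μ: Ĥ consists of μ_h copies of each h ∈ H, and V̂(F̂) = φ(V(ψ(F̂))), where ψ collapses copies to original elements and φ expands elements to all their copies. Then (Ĥ, V̂) is a violator space, and dim(Ĥ, V̂) = dim(H, V). -/
/- On subsets of `Ĥ` the collapse `ψ` is the image under `Prod.fst`, and `φ` is injective since
`μ ≥ 1`, so `V̂ F̂ = V̂ Ĝ` iff `V (ψ F̂) = V (ψ Ĝ)`. A basis of `V̂` holds at most one copy of each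
element (a second copy can be dropped without changing `ψ`), so `ψ` maps it bijectively onto a
basis of `V`; conversely a basis `B` of `G` lifts to the basis `B × {0}` of `φ G`. -/

open Finset

/-- A violator space: a finite set `H` together with a violator mapping `V : 2^H → 2^H`
satisfying consistency and locality. -/
structure ViolatorSpace (H : Type*) [Fintype H] [DecidableEq H] where
  V : Finset H → Finset H
  consistency : ∀ G : Finset H, Disjoint G (V G)
  locality : ∀ F G : Finset H, F ⊆ G → Disjoint G (V F) → V G = V F

/-- `B` is a basis of `G` for the mapping `W`: a minimal subset of `G` with the
same violators as `G`. -/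
def IsBasisOf {H : Type*}
    (W : Finset H → Finset H) (B G : Finset H) : Prop :=
  B ⊆ G ∧ W B = W G ∧ ∀ B' : Finset H, B' ⊂ B → W B' ≠ W G

/-- `φ` expands each element `h ∈ F` to its `μ h` copies `(h, 0), …, (h, μ h - 1)`. -/
def phiMap {H : Type*} [Fintype H] [DecidableEq H] (μ : H → ℕ) (F : Finset H) :
    Finset (H × ℕ) :=
  F.biUnion (fun h => (Finset.range (μ h)).image (fun j => (h, j)))

/-- The ground multiset `Ĥ = φ(H)` consisting of `μ h` copies of each `h ∈ H`. -/
def hatH {H : Type*} [Fintype H] [DecidableEq H] (μ : H → ℕ) : Finset (H × ℕ) :=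
  phiMap μ univ

/-- `ψ` collapses a set of copies to the set of original elements:
`ψ(F̂) = {h ∈ H : φ({h}) ∩ F̂ ≠ ∅}`. -/
def psiMap {H : Type*} [Fintype H] [DecidableEq H] (μ : H → ℕ)
    (Fhat : Finset (H × ℕ)) : Finset H :=
  univ.filter (fun h => (phiMap μ {h} ∩ Fhat).Nonempty)

/-- The multiset extension of the violator mapping: `V̂(F̂) = φ(V(ψ(F̂)))`. -/
def Vhat {H : Type*} [Fintype H] [DecidableEq H]
    (VS : ViolatorSpace H) (μ : H → ℕ) (Fhat : Finset (H × ℕ)) : Finset (H × ℕ) :=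
  phiMap μ (VS.V (psiMap μ Fhat))

theorem Finset.card_image_eq_of_forall_ssubset_image_ne {α β : Type*} [DecidableEq α]
    [DecidableEq β] {f : α → β} {s : Finset α}
    (hs : ∀ t ⊂ s, t.image f ≠ s.image f) : (s.image f).card = s.card := by
  rw [card_image_iff]
  intro x hx y hy hxy
  by_contra hne
  refine hs (s.erase y) (erase_ssubset hy)
    (Subset.antisymm (image_subset_image (erase_subset y s)) ?_)
  intro b hb
  obtain ⟨z, hz, rfl⟩ := mem_image.1 hb
  by_cases hzy : z = y
  · subst hzy
    exact mem_image.2 ⟨x, mem_erase.2 ⟨hne, hx⟩, hxy⟩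
  · exact mem_image_of_mem f (mem_erase.2 ⟨hzy, hz⟩)

theorem Finset.exists_ssubset_image_eq_of_ssubset_image {α β : Type*} [DecidableEq β]
    {f : α → β} {s : Finset α} {u : Finset β} (hu : u ⊂ s.image f) :
    ∃ t ⊂ s, t.image f = u := by
  obtain ⟨t, hts, rfl⟩ := subset_image_iff.1 hu.1
  exact ⟨t, ssubset_of_subset_of_ne hts (by rintro rfl; exact hu.ne rfl), rfl⟩

section MultisetExtension

variable {H : Type*} [Fintype H] [DecidableEq H] {μ : H → ℕ}

lemma mem_phiMap {x : H × ℕ} {F : Finset H} : x ∈ phiMap μ F ↔ x.1 ∈ F ∧ x.2 < μ x.1 := by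
  obtain ⟨a, b⟩ := x
  simp only [phiMap, mem_biUnion, mem_image, mem_range, Prod.ext_iff]
  constructor
  · rintro ⟨h, hF, j, hj, rfl, rfl⟩
    exact ⟨hF, hj⟩
  · rintro ⟨hF, hj⟩
    exact ⟨a, hF, b, hj, rfl, rfl⟩

lemma mem_hatH {x : H × ℕ} : x ∈ hatH μ ↔ x.2 < μ x.1 := by
  simp [hatH, mem_phiMap]

lemma phiMap_subset_hatH (F : Finset H) : phiMap μ F ⊆ hatH μ :=
  biUnion_subset_biUnion_of_subset_left _ (subset_univ F)

lemma mem_psiMap {h : H} {Fhat : Finset (H × ℕ)} :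
    h ∈ psiMap μ Fhat ↔ ∃ j < μ h, (h, j) ∈ Fhat := by
  rw [psiMap, mem_filter_univ]
  simp only [Finset.Nonempty, mem_inter, mem_phiMap, mem_singleton, Prod.exists]
  constructor
  · rintro ⟨a, j, ⟨rfl, hj⟩, hmem⟩
    exact ⟨j, hj, hmem⟩
  · rintro ⟨j, hj, hmem⟩
    exact ⟨h, j, ⟨rfl, hj⟩, hmem⟩

lemma psiMap_mono {Fhat Ghat : Finset (H × ℕ)} (h : Fhat ⊆ Ghat) :
    psiMap μ Fhat ⊆ psiMap μ Ghat := fun a ha => by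
  obtain ⟨j, hj, hmem⟩ := mem_psiMap.1 ha
  exact mem_psiMap.2 ⟨j, hj, h hmem⟩

lemma psiMap_eq_image_fst {Fhat : Finset (H × ℕ)} (hF : Fhat ⊆ hatH μ) :
    psiMap μ Fhat = Fhat.image Prod.fst := by
  ext h
  simp only [mem_psiMap, mem_image, Prod.exists, exists_and_right, exists_eq_right]
  exact ⟨fun ⟨j, _, hj⟩ => ⟨j, hj⟩, fun ⟨j, hj⟩ => ⟨j, mem_hatH.1 (hF hj), hj⟩⟩

lemma psiMap_image_mk_zero (hμ : ∀ h, 1 ≤ μ h) (F : Finset H) :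
    psiMap μ (F.image (·, 0)) = F := by
  have hF : F.image (·, 0) ⊆ hatH μ := fun x hx => by
    obtain ⟨h, -, rfl⟩ := mem_image.1 hx
    exact mem_hatH.2 (hμ h)
  rw [psiMap_eq_image_fst hF, image_image]
  exact image_id

lemma psiMap_phiMap (hμ : ∀ h, 1 ≤ μ h) (F : Finset H) : psiMap μ (phiMap μ F) = F := by
  ext h
  rw [mem_psiMap]
  exact ⟨fun ⟨_, _, hmem⟩ => (mem_phiMap.1 hmem).1, fun hF => ⟨0, hμ h, mem_phiMap.2 ⟨hF, hμ h⟩⟩⟩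

lemma phiMap_injective (hμ : ∀ h, 1 ≤ μ h) : Function.Injective (phiMap μ) :=
  Function.LeftInverse.injective (psiMap_phiMap hμ)

variable {VS : ViolatorSpace H}

lemma Vhat_eq_iff (hμ : ∀ h, 1 ≤ μ h) {Fhat Ghat : Finset (H × ℕ)} :
    Vhat VS μ Fhat = Vhat VS μ Ghat ↔ VS.V (psiMap μ Fhat) = VS.V (psiMap μ Ghat) :=
  (phiMap_injective hμ).eq_iff

lemma Vhat_consistency {Fhat : Finset (H × ℕ)} (hF : Fhat ⊆ hatH μ) :
    Disjoint Fhat (Vhat VS μ Fhat) := by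
  rw [Finset.disjoint_left]
  rintro ⟨a, b⟩ hmem hv
  have ha : a ∈ psiMap μ Fhat := mem_psiMap.2 ⟨b, mem_hatH.1 (hF hmem), hmem⟩
  exact Finset.disjoint_left.1 (VS.consistency _) ha (mem_phiMap.1 hv).1

lemma Vhat_locality {Fhat Ghat : Finset (H × ℕ)} (hFG : Fhat ⊆ Ghat)
    (hdisj : Disjoint Ghat (Vhat VS μ Fhat)) : Vhat VS μ Ghat = Vhat VS μ Fhat := by
  have hd : Disjoint (psiMap μ Ghat) (VS.V (psiMap μ Fhat)) := by
    rw [Finset.disjoint_left]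
    intro h hG hV
    obtain ⟨j, hj, hmem⟩ := mem_psiMap.1 hG
    exact Finset.disjoint_left.1 hdisj hmem (mem_phiMap.2 ⟨hV, hj⟩)
  rw [Vhat, Vhat, VS.locality _ _ (psiMap_mono hFG) hd]

lemma card_image_fst_of_isBasisOf_Vhat {Ghat Bhat : Finset (H × ℕ)} (hG : Ghat ⊆ hatH μ)
    (hB : IsBasisOf (Vhat VS μ) Bhat Ghat) : (Bhat.image Prod.fst).card = Bhat.card := by
  obtain ⟨hBG, hBV, hmin⟩ := hB
  refine card_image_eq_of_forall_ssubset_image_ne fun B' hB' himage => hmin B' hB' ?_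
  have hB'hat : B' ⊆ hatH μ := hB'.1.trans (hBG.trans hG)
  rw [← hBV, Vhat, Vhat, psiMap_eq_image_fst hB'hat, psiMap_eq_image_fst (hBG.trans hG), himage]

lemma isBasisOf_image_fst_of_isBasisOf_Vhat (hμ : ∀ h, 1 ≤ μ h) {Ghat Bhat : Finset (H × ℕ)}
    (hG : Ghat ⊆ hatH μ) (hB : IsBasisOf (Vhat VS μ) Bhat Ghat) :
    IsBasisOf VS.V (Bhat.image Prod.fst) (Ghat.image Prod.fst) := by
  obtain ⟨hBG, hBV, hmin⟩ := hB
  have hBhat : Bhat ⊆ hatH μ := hBG.trans hG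
  rw [Vhat_eq_iff hμ, psiMap_eq_image_fst hBhat, psiMap_eq_image_fst hG] at hBV
  refine ⟨image_subset_image hBG, hBV, fun C hC hCV => ?_⟩
  obtain ⟨C', hC'B, rfl⟩ := exists_ssubset_image_eq_of_ssubset_image hC
  refine hmin C' hC'B ((Vhat_eq_iff hμ).2 ?_)
  rwa [psiMap_eq_image_fst (hC'B.1.trans hBhat), psiMap_eq_image_fst hG]

lemma isBasisOf_Vhat_image_mk_zero (hμ : ∀ h, 1 ≤ μ h) {G B : Finset H}
    (hB : IsBasisOf VS.V B G) : IsBasisOf (Vhat VS μ) (B.image (·, 0)) (phiMap μ G) := by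
  obtain ⟨hBG, hBV, hmin⟩ := hB
  refine ⟨fun x hx => ?_, ?_, fun C hC hCV => ?_⟩
  · obtain ⟨h, hh, rfl⟩ := mem_image.1 hx
    exact mem_phiMap.2 ⟨hBG hh, hμ h⟩
  · rw [Vhat_eq_iff hμ, psiMap_image_mk_zero hμ, psiMap_phiMap hμ, hBV]
  · obtain ⟨C', hC'B, rfl⟩ := exists_ssubset_image_eq_of_ssubset_image hC
    rw [Vhat_eq_iff hμ, psiMap_image_mk_zero hμ, psiMap_phiMap hμ] at hCV
    exact hmin C' hC'B hCV

end MultisetExtension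

/-- The multiset extension `(Ĥ, V̂)` of a violator space `(H, V)` with respect to
multiplicities `μ ≥ 1` is a violator space (consistency and locality on the
ground set `Ĥ`), and `dim(Ĥ, V̂) = dim(H, V)`. -/
theorem multiset_extension_violator_space {H : Type*} [Fintype H] [DecidableEq H]
    (VS : ViolatorSpace H) (μ : H → ℕ) (hμ : ∀ h, 1 ≤ μ h) (d : ℕ)
    (hdim : (∀ G B : Finset H, IsBasisOf VS.V B G → B.card ≤ d) ∧
      (∃ G B : Finset H, IsBasisOf VS.V B G ∧ B.card = d)) :
    (∀ Fhat : Finset (H × ℕ), Fhat ⊆ hatH μ → Disjoint Fhat (Vhat VS μ Fhat)) ∧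
    (∀ Fhat Ghat : Finset (H × ℕ), Fhat ⊆ Ghat → Ghat ⊆ hatH μ →
      Disjoint Ghat (Vhat VS μ Fhat) → Vhat VS μ Ghat = Vhat VS μ Fhat) ∧
    (∀ Ghat Bhat : Finset (H × ℕ), Ghat ⊆ hatH μ →
      IsBasisOf (Vhat VS μ) Bhat Ghat → Bhat.card ≤ d) ∧
    (∃ Ghat Bhat : Finset (H × ℕ), Ghat ⊆ hatH μ ∧
      IsBasisOf (Vhat VS μ) Bhat Ghat ∧ Bhat.card = d) := by
  obtain ⟨hle, G, B, hB, hcard⟩ := hdim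
  refine ⟨fun _ hF => Vhat_consistency hF, fun _ _ hFG _ hd => Vhat_locality hFG hd,
    fun Ghat Bhat hG hBhat => ?_, ⟨phiMap μ G, B.image (·, 0), phiMap_subset_hatH G,
      isBasisOf_Vhat_image_mk_zero hμ hB, ?_⟩⟩
  · rw [← card_image_fst_of_isBasisOf_Vhat hG hBhat]
    exact hle _ _ (isBasisOf_image_fst_of_isBasisOf_Vhat hμ hG hBhat)
  · rw [card_image_of_injective _ (Prod.mk_left_injective 0), hcard]
end

section
/- The violation pattern of a nondegenerate violator space is a hypercube partition, and conversely any hypercube partition P of 2^H is the violation pattern of some nondegenerate violator space (H, V): defining V(G) = H \ B' where [B, B'] is the interval of P containing G yields a nondegenerate violator space whose equivalence classes under V(F) = V(G) are exactly the intervals of P. -/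
open Finset

/-- The interval `[A, B] = {C : A ⊆ C ⊆ B}` of the hypercube `2^H`. -/
def cubeInterval {H : Type*} (A B : Finset H) : Set (Finset H) :=
  {C | A ⊆ C ∧ C ⊆ B}

/-- A hypercube partition: a partition of the vertices `2^H` of the hypercube
all of whose classes are intervals (i.e. subcubes). -/
def IsHypercubePartition {H : Type*} (P : Set (Set (Finset H))) : Prop :=
  Setoid.IsPartition P ∧
    ∀ c ∈ P, ∃ A B : Finset H, A ⊆ B ∧ c = cubeInterval A B

/-- The violation pattern of a violator space: the partition of `2^H` into the
equivalence classes of the relation `F ~ G ↔ V(F) = V(G)`. -/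
def violationPattern {H : Type*} [Fintype H] [DecidableEq H]
    (VS : ViolatorSpace H) : Set (Set (Finset H)) :=
  {c | ∃ G : Finset H, c = {F : Finset H | VS.V F = VS.V G}}

/-!
In a violator space, `V F = V G` forces `F ⊆ H \ V G`, and `H \ V G` has the violators of `G`
by locality. With unique bases, every `F` in the class of `G` shares its basis with
`H \ V G`, so the class is the interval from that basis up to `H \ V G`.

Conversely, for a hypercube partition `P` the interval of `P` containing `G` is determined
by its top, because the top lies in that interval only. Hence `V G = H \ B'` has exactly
the intervals of `P` as classes, and the bottom of the interval of `G` is the least, hence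
unique, basis of `G`.
-/

theorem cubeInterval_eq_Icc {H : Type*} (A B : Finset H) : cubeInterval A B = Set.Icc A B :=
  rfl

theorem cubeInterval_inj {H : Type*} {A B A' B' : Finset H} (h : A ⊆ B) :
    cubeInterval A B = cubeInterval A' B' ↔ A = A' ∧ B = B' := by
  simpa only [cubeInterval_eq_Icc] using Set.Icc_eq_Icc_iff h

section IsBasisOf

variable {H : Type*} {W : Finset H → Finset H} {B F G : Finset H}

theorem IsBasisOf.of_subset (hB : IsBasisOf W B F) (hFG : F ⊆ G) (hW : W F = W G) :
    IsBasisOf W B G :=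
  ⟨hB.1.trans hFG, hB.2.1.trans hW, fun B' hB' => hW ▸ hB.2.2 B' hB'⟩

theorem isBasisOf_iff_eq_of_least {m : Finset H} (hmG : m ⊆ G) (hm : W m = W G)
    (hle : ∀ B, W B = W G → m ⊆ B) : IsBasisOf W B G ↔ B = m := by
  constructor
  · rintro ⟨-, hWB, hmin⟩
    by_contra hne
    exact hmin m (ssubset_of_subset_of_ne (hle B hWB) (Ne.symm hne)) hm
  · rintro rfl
    exact ⟨hmG, hm, fun B' hB' hWB' => not_subset_of_ssubset hB' (hle B' hWB')⟩

end IsBasisOf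

namespace ViolatorSpace

variable {H : Type*} [Fintype H] [DecidableEq H] (VS : ViolatorSpace H)

theorem subset_compl_V (G : Finset H) : G ⊆ univ \ VS.V G :=
  subset_sdiff.2 ⟨subset_univ G, VS.consistency G⟩

theorem V_eq_of_subset_compl_V {B F : Finset H} (hBF : B ⊆ F) (hF : F ⊆ univ \ VS.V B) :
    VS.V F = VS.V B :=
  VS.locality B F hBF (subset_sdiff.1 hF).2

theorem V_compl_V (G : Finset H) : VS.V (univ \ VS.V G) = VS.V G :=
  VS.V_eq_of_subset_compl_V (VS.subset_compl_V G) subset_rfl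

theorem setOf_V_eq_eq_cubeInterval (hnd : ∀ G : Finset H, ∃! B : Finset H, IsBasisOf VS.V B G)
    {B G : Finset H} (hB : IsBasisOf VS.V B (univ \ VS.V G)) :
    {F | VS.V F = VS.V G} = cubeInterval B (univ \ VS.V G) := by
  ext F
  constructor
  · intro hF
    have hFcl : F ⊆ univ \ VS.V G := (hF : VS.V F = VS.V G) ▸ VS.subset_compl_V F
    obtain ⟨BF, hBF, -⟩ := hnd F
    have hBF_cl : IsBasisOf VS.V BF (univ \ VS.V G) :=
      hBF.of_subset hFcl (hF.trans (VS.V_compl_V G).symm)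
    have hBF_eq : BF = B := (hnd _).unique hBF_cl hB
    exact ⟨hBF_eq ▸ hBF.1, hFcl⟩
  · rintro ⟨hBF, hFcl⟩
    have hVB : VS.V B = VS.V G := hB.2.1.trans (VS.V_compl_V G)
    exact (VS.V_eq_of_subset_compl_V hBF (hVB ▸ hFcl)).trans hVB

theorem violationPattern_eq_classes : violationPattern VS = (Setoid.ker VS.V).classes := by
  simp only [violationPattern, Setoid.classes, Setoid.ker_def]

theorem isHypercubePartition_violationPattern
    (hnd : ∀ G : Finset H, ∃! B : Finset H, IsBasisOf VS.V B G) :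
    IsHypercubePartition (violationPattern VS) := by
  refine ⟨VS.violationPattern_eq_classes ▸ Setoid.isPartition_classes _, ?_⟩
  rintro c ⟨G, rfl⟩
  obtain ⟨B, hB, -⟩ := hnd (univ \ VS.V G)
  exact ⟨B, _, hB.1, VS.setOf_V_eq_eq_cubeInterval hnd hB⟩

end ViolatorSpace

namespace IsHypercubePartition

variable {H : Type*} {P : Set (Set (Finset H))}

theorem exists_endpoints (hP : IsHypercubePartition P) (G : Finset H) :
    ∃ I : Finset H × Finset H, I.1 ⊆ I.2 ∧ cubeInterval I.1 I.2 ∈ P ∧ G ∈ cubeInterval I.1 I.2 := by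
  obtain ⟨c, ⟨hcP, hGc⟩, -⟩ := hP.1.2 G
  obtain ⟨A, B, hAB, rfl⟩ := hP.2 c hcP
  exact ⟨(A, B), hAB, hcP, hGc⟩

/-- The endpoints `(B, B')` of the interval `[B, B']` of `P` containing `G`. -/
noncomputable def endpoints (hP : IsHypercubePartition P) (G : Finset H) :
    Finset H × Finset H :=
  (hP.exists_endpoints G).choose

variable (hP : IsHypercubePartition P)

theorem endpoints_spec (G : Finset H) :
    (hP.endpoints G).1 ⊆ (hP.endpoints G).2 ∧
      cubeInterval (hP.endpoints G).1 (hP.endpoints G).2 ∈ P ∧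
      G ∈ cubeInterval (hP.endpoints G).1 (hP.endpoints G).2 :=
  (hP.exists_endpoints G).choose_spec

theorem endpoints_eq {A B G : Finset H} (hc : cubeInterval A B ∈ P)
    (hG : G ∈ cubeInterval A B) : hP.endpoints G = (A, B) := by
  obtain ⟨hsub, hcP, hGc⟩ := hP.endpoints_spec G
  have hblock := (hP.1.2 G).unique ⟨hcP, hGc⟩ ⟨hc, hG⟩
  obtain ⟨h1, h2⟩ := (cubeInterval_inj hsub).1 hblock
  exact Prod.ext h1 h2

theorem endpoints_eq_iff {F G : Finset H} :
    hP.endpoints F = hP.endpoints G ↔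
      F ∈ cubeInterval (hP.endpoints G).1 (hP.endpoints G).2 := by
  obtain ⟨-, hcP, -⟩ := hP.endpoints_spec G
  exact ⟨fun h => h ▸ (hP.endpoints_spec F).2.2, fun hF => hP.endpoints_eq hcP hF⟩

theorem endpoints_eq_of_snd_eq {F G : Finset H}
    (h : (hP.endpoints F).2 = (hP.endpoints G).2) : hP.endpoints F = hP.endpoints G := by
  have top_mem : ∀ G, hP.endpoints (hP.endpoints G).2 = hP.endpoints G := fun G =>
    hP.endpoints_eq_iff.2 ⟨(hP.endpoints_spec G).1, subset_rfl⟩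
  rw [← top_mem F, h, top_mem G]

variable [Fintype H] [DecidableEq H]

noncomputable def toViolatorSpace : ViolatorSpace H where
  V G := univ \ (hP.endpoints G).2
  consistency G := disjoint_sdiff.mono_left (hP.endpoints_spec G).2.2.2
  locality F G hFG hG := by
    have hGtop : G ⊆ (hP.endpoints F).2 := by
      simpa only [← compl_eq_univ_sdiff, disjoint_compl_right_iff] using hG
    rw [hP.endpoints_eq_iff.2 ⟨(hP.endpoints_spec F).2.2.1.trans hFG, hGtop⟩]

theorem toViolatorSpace_V (G : Finset H) : hP.toViolatorSpace.V G = univ \ (hP.endpoints G).2 :=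
  rfl

theorem toViolatorSpace_V_eq_iff {F G : Finset H} :
    hP.toViolatorSpace.V F = hP.toViolatorSpace.V G ↔
      F ∈ cubeInterval (hP.endpoints G).1 (hP.endpoints G).2 := by
  rw [← hP.endpoints_eq_iff, toViolatorSpace_V, toViolatorSpace_V, ← compl_eq_univ_sdiff,
    ← compl_eq_univ_sdiff, compl_inj_iff]
  exact ⟨hP.endpoints_eq_of_snd_eq, congrArg Prod.snd⟩

theorem isBasisOf_toViolatorSpace_iff {B G : Finset H} :
    IsBasisOf hP.toViolatorSpace.V B G ↔ B = (hP.endpoints G).1 := by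
  refine isBasisOf_iff_eq_of_least (hP.endpoints_spec G).2.2.1 ?_ fun B hB => (hP.toViolatorSpace_V_eq_iff.1 hB).1
  exact hP.toViolatorSpace_V_eq_iff.2 ⟨subset_rfl, (hP.endpoints_spec G).1⟩

theorem violationPattern_toViolatorSpace : violationPattern hP.toViolatorSpace = P := by
  have hclass : ∀ G, {F | hP.toViolatorSpace.V F = hP.toViolatorSpace.V G} =
      cubeInterval (hP.endpoints G).1 (hP.endpoints G).2 := fun G =>
    Set.ext fun _ => hP.toViolatorSpace_V_eq_iff
  ext c
  constructor
  · rintro ⟨G, rfl⟩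
    exact hclass G ▸ (hP.endpoints_spec G).2.1
  · intro hc
    obtain ⟨A, B, hAB, rfl⟩ := hP.2 c hc
    refine ⟨A, ?_⟩
    rw [hclass, hP.endpoints_eq hc ⟨subset_rfl, hAB⟩]

end IsHypercubePartition

/-- **Hypercube Partition Theorem.** The violation pattern of a nondegenerate
violator space (one where every subset has a unique basis) is a hypercube
partition; conversely, every hypercube partition `P` of `2^H` is the violation
pattern of some nondegenerate violator space: setting `V(G) = H \ B'`, where
`[B, B']` is the interval of `P` containing `G`, yields a nondegenerate violator
space whose violation pattern is exactly `P`. -/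
theorem hypercube_partition_theorem {H : Type*} [Fintype H] [DecidableEq H] :
    (∀ VS : ViolatorSpace H,
      (∀ G : Finset H, ∃! B : Finset H, IsBasisOf VS.V B G) →
      IsHypercubePartition (violationPattern VS)) ∧
    (∀ P : Set (Set (Finset H)), IsHypercubePartition P →
      ∃ VS : ViolatorSpace H,
        (∀ G A B : Finset H, A ⊆ B → cubeInterval A B ∈ P →
          G ∈ cubeInterval A B → VS.V G = univ \ B) ∧
        (∀ G : Finset H, ∃! B : Finset H, IsBasisOf VS.V B G) ∧
        violationPattern VS = P) := by
  refine ⟨fun VS hnd => VS.isHypercubePartition_violationPattern hnd, fun P hP => ?_⟩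
  refine ⟨hP.toViolatorSpace, fun G A B _ hc hG => ?_, fun G => ?_,
    hP.violationPattern_toViolatorSpace⟩
  · rw [hP.toViolatorSpace_V, hP.endpoints_eq hc hG]
  · exact ⟨_, hP.isBasisOf_toViolatorSpace_iff.2 rfl,
      fun B hB => hP.isBasisOf_toViolatorSpace_iff.1 hB⟩
end
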